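/- arXiv:2407.15721 — 2 statements merged into one kernel-verified Lean document; each statement's English description precedes it below -/
import Mathlib

section
/- Let g be the morphism on {0,1,2} with g(0) = 0122, g(1) = 01220, g(2) = 0120. Then even(fib) = ρ(g^∞(0)) for the coding ρ with ρ(0) = ρ(1) = 0, ρ(2) = 1, and odd(fib) = τ(g^∞(0)) for the coding τ with τ(0) = 1, τ(1) = τ(2) = 0. -/
/-- A morphism `f : Γ → Γ⁺` applied to a finite word, by concatenation. -/
def applyW {Γ : Type*} (f : Γ → List Γ) (w : List Γ) : List Γ := w.flatMap f

/-- A morphism applied to an infinite sequence, by concatenation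
(meaningful when every `f a` is nonempty: then the `n`-th letter of
`f(σ(0))f(σ(1))⋯` lies within the first `n+1` blocks). -/
def applyS {Γ : Type*} (f : Γ → List Γ) (σ : ℕ → Γ) (n : ℕ) : Γ :=
  ((List.range (n + 1)).flatMap fun i => f (σ i)).getD n (σ 0)

/-- A coding applied letterwise to an infinite sequence. -/
def applyC {Γ S : Type*} (τ : Γ → S) (σ : ℕ → Γ) : ℕ → S := fun n => τ (σ n)

/-- The fixed point `f^∞(a)` of a morphism `f` with `f a = a·u`, `u` nonempty:
its `n`-th letter is the `n`-th letter of `f^(n+1)(a)` (which has length `> n`). -/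
def fixpt {Γ : Type*} (f : Γ → List Γ) (a : Γ) (n : ℕ) : Γ :=
  ((applyW f)^[n + 1] [a]).getD n a

/-!
Let `p` be the 2-uniform morphism `0 ↦ 01, 1 ↦ 00, 2 ↦ 10` (`fibPairCoding`).
On letters one checks `p ∘ g = f³ ∘ p`, hence `p(g^m(0)) = f^{3m}(p(0)) = f^{3m+1}(0)`
and `p(g^∞(0)) = fib`.
So the `i`-th letter `b` of `g^∞(0)` is sent by `p` to the block `fib(2i) fib(2i+1)`,
and `ρ`, `τ` read off the first and the second letter of `p(b)`.
-/

theorem List.IsPrefix.getD_eq {α : Type*} {l₁ l₂ : List α} (h : l₁ <+: l₂) {n : ℕ}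
    (hn : n < l₁.length) (d : α) : l₁.getD n d = l₂.getD n d := by
  obtain ⟨t, rfl⟩ := h
  exact (List.getD_append _ _ _ _ hn).symm

theorem List.getD_flatMap_of_length_eq {α β : Type*} {p : α → List β} {k : ℕ}
    (hp : ∀ b, (p b).length = k) {w : List α} {i j : ℕ} (hi : i < w.length) (hj : j < k)
    (d : β) (e : α) : (w.flatMap p).getD (k * i + j) d = (p (w.getD i e)).getD j d := by
  induction w generalizing i with
  | nil => simp at hi
  | cons b w ih =>
    rw [List.flatMap_cons]
    cases i with
    | zero => simpa using List.getD_append _ _ d j (by rw [hp]; exact hj)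
    | succ i =>
      have hshift : k * (i + 1) + j - (p b).length = k * i + j := by
        rw [hp, Nat.mul_succ]; omega
      rw [List.getD_append_right _ _ _ _ (by rw [hp, Nat.mul_succ]; omega), hshift,
        ih (by simpa using hi)]
      rfl

section Morphism

variable {Γ : Type*}

theorem applyW_append (f : Γ → List Γ) (u v : List Γ) :
    applyW f (u ++ v) = applyW f u ++ applyW f v :=
  List.flatMap_append

theorem iterate_applyW_append (f : Γ → List Γ) (m : ℕ) (u v : List Γ) :
    (applyW f)^[m] (u ++ v) = (applyW f)^[m] u ++ (applyW f)^[m] v := by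
  induction m generalizing u v with
  | zero => rfl
  | succ m ih => simp only [Function.iterate_succ_apply, applyW_append, ih]

theorem iterate_applyW_nil (f : Γ → List Γ) (m : ℕ) : (applyW f)^[m] [] = [] :=
  Function.iterate_fixed rfl m

variable {f : Γ → List Γ}

theorem iterate_applyW_ne_nil (hf : ∀ b, f b ≠ []) {w : List Γ} (hw : w ≠ []) (m : ℕ) :
    (applyW f)^[m] w ≠ [] := by
  induction m with
  | zero => exact hw
  | succ m ih =>
    obtain ⟨b, hb⟩ := List.exists_mem_of_ne_nil _ ih
    rw [Function.iterate_succ_apply', applyW, Ne, List.flatMap_eq_nil_iff]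
    exact fun h => hf b (h b hb)

section FixedPoint

variable {a : Γ} {u : List Γ}

theorem iterate_applyW_succ_singleton (hfa : f a = a :: u) (m : ℕ) :
    (applyW f)^[m + 1] [a] = (applyW f)^[m] [a] ++ (applyW f)^[m] u := by
  rw [Function.iterate_succ_apply, ← iterate_applyW_append]
  simp [applyW, hfa]

theorem iterate_applyW_prefix (hfa : f a = a :: u) {m n : ℕ} (h : m ≤ n) :
    (applyW f)^[m] [a] <+: (applyW f)^[n] [a] := by
  induction n, h using Nat.le_induction with
  | base => exact List.prefix_refl _
  | succ n _ ih =>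
    rw [iterate_applyW_succ_singleton hfa]
    exact ih.trans (List.prefix_append _ _)

theorem lt_length_iterate_applyW (hf : ∀ b, f b ≠ []) (hfa : f a = a :: u) (hu : u ≠ [])
    (m : ℕ) : m < ((applyW f)^[m] [a]).length := by
  induction m with
  | zero => simp
  | succ m ih =>
    have := List.length_pos_iff.mpr (iterate_applyW_ne_nil hf hu m)
    rw [iterate_applyW_succ_singleton hfa, List.length_append]
    omega

theorem fixpt_eq_getD_iterate (hf : ∀ b, f b ≠ []) (hfa : f a = a :: u) (hu : u ≠ [])
    {m n : ℕ} (hn : n < ((applyW f)^[m] [a]).length) :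
    fixpt f a n = ((applyW f)^[m] [a]).getD n a := by
  rcases le_total m (n + 1) with h | h
  · exact ((iterate_applyW_prefix hfa h).getD_eq hn a).symm
  · exact (iterate_applyW_prefix hfa h).getD_eq
      (n.lt_succ_self.trans (lt_length_iterate_applyW hf hfa hu _)) a

end FixedPoint

variable {Δ : Type*} {g : Δ → List Δ} {p : Δ → List Γ}

theorem semiconj_flatMap_applyW {l : ℕ} (hpg : ∀ b, (g b).flatMap p = (applyW f)^[l] (p b)) :
    Function.Semiconj (List.flatMap p) (applyW g) (applyW f)^[l] := by
  intro w
  induction w with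
  | nil => exact (iterate_applyW_nil f l).symm
  | cons b w ih =>
    rw [List.flatMap_cons, iterate_applyW_append, ← hpg, ← ih, ← List.flatMap_append]
    rfl

theorem fixpt_mul_add_eq_getD_fixpt {a : Γ} {c : Δ} {u : List Γ} {v : List Δ} {k l r : ℕ}
    (hf : ∀ b, f b ≠ []) (hfa : f a = a :: u) (hu : u ≠ [])
    (hg : ∀ b, g b ≠ []) (hgc : g c = c :: v) (hv : v ≠ [])
    (hp : ∀ b, (p b).length = k) (hpg : ∀ b, (g b).flatMap p = (applyW f)^[l] (p b))
    (hpc : p c = (applyW f)^[r] [a]) (i : ℕ) {j : ℕ} (hj : j < k) :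
    fixpt f a (k * i + j) = (p (fixpt g c i)).getD j a := by
  set w := (applyW g)^[i + 1] [c]
  have hi : i + 1 < w.length := lt_length_iterate_applyW hg hgc hv (i + 1)
  have hpw : w.flatMap p = (applyW f)^[l * (i + 1) + r] [a] := by
    rw [(semiconj_flatMap_applyW hpg).iterate_right (i + 1) [c], ← Function.iterate_mul,
      Function.iterate_add_apply, ← hpc, List.flatMap_singleton]
  have hlen : k * i + j < (w.flatMap p).length := by
    have : k * (i + 1) ≤ k * w.length := Nat.mul_le_mul_left k hi.le
    simp only [List.length_flatMap, hp, List.map_const', List.sum_replicate, smul_eq_mul]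
    nlinarith
  rw [fixpt_eq_getD_iterate hf hfa hu (hpw ▸ hlen), ← hpw]
  exact List.getD_flatMap_of_length_eq hp (by omega) hj a c

end Morphism

def fibPairCoding : Fin 3 → List (Fin 2) := ![[0, 1], [0, 0], [1, 0]]

/-- For `g(0)=0122, g(1)=01220, g(2)=0120`:
`even(fib) = ρ(g^∞(0))` for `ρ(0)=ρ(1)=0, ρ(2)=1`, and
`odd(fib) = τ(g^∞(0))` for `τ(0)=1, τ(1)=τ(2)=0`, where `fib = f^∞(0)` for
`f(0)=01, f(1)=0`, `even(σ)(i)=σ(2i)` and `odd(σ)(i)=σ(2i+1)`. -/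
theorem stmt_18 :
    (fun i : ℕ => fixpt (![[0, 1], [0]] : Fin 2 → List (Fin 2)) 0 (2 * i)) =
      applyC (![0, 0, 1] : Fin 3 → Fin 2)
        (fixpt (![[0, 1, 2, 2], [0, 1, 2, 2, 0], [0, 1, 2, 0]] :
          Fin 3 → List (Fin 3)) 0) ∧
    (fun i : ℕ => fixpt (![[0, 1], [0]] : Fin 2 → List (Fin 2)) 0 (2 * i + 1)) =
      applyC (![1, 0, 0] : Fin 3 → Fin 2)
        (fixpt (![[0, 1, 2, 2], [0, 1, 2, 2, 0], [0, 1, 2, 0]] :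
          Fin 3 → List (Fin 3)) 0) := by
  have hblock (i : ℕ) {j : ℕ} (hj : j < 2) :=
    fixpt_mul_add_eq_getD_fixpt (f := ![[0, 1], [0]])
      (g := ![[0, 1, 2, 2], [0, 1, 2, 2, 0], [0, 1, 2, 0]]) (p := fibPairCoding) (a := 0) (c := 0)
      (u := [1]) (v := [1, 2, 2]) (l := 3) (r := 1) (by decide) rfl (List.cons_ne_nil _ _)
      (by decide) rfl (List.cons_ne_nil _ _) (by decide) (by decide) (by decide) i hj
  have hρ : ∀ b, (fibPairCoding b).getD 0 0 = (![0, 0, 1] : Fin 3 → Fin 2) b := by decide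
  have hτ : ∀ b, (fibPairCoding b).getD 1 0 = (![1, 0, 0] : Fin 3 → Fin 2) b := by decide
  exact ⟨funext fun i => (hblock i two_pos).trans (hρ _),
    funext fun i => (hblock i one_lt_two).trans (hτ _)⟩
end

section
/- Let f_e be the morphism on {0,1,2,3,4} with f_e(0) = 01, f_e(1) = 2, f_e(2) = 31, f_e(3) = 04, f_e(4) = 0, and let τ_e be the coding with τ_e(0) = τ_e(1) = 0, τ_e(2) = τ_e(3) = τ_e(4) = 1. Then even(fib) = τ_e(f_e^∞(0)). -/
section Words

variable {Γ : Type*}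

def factor (σ : ℕ → Γ) (i n : ℕ) : List Γ := (List.range' i n).map σ

variable (σ : ℕ → Γ)

@[simp]
lemma length_factor (i n : ℕ) : (factor σ i n).length = n := by simp [factor]

lemma factor_add (i m n : ℕ) : factor σ i (m + n) = factor σ i m ++ factor σ (i + m) n := by
  rw [factor, factor, factor, ← List.map_append, List.range'_append_1]

lemma take_factor {i n k : ℕ} (h : k ≤ n) : (factor σ i n).take k = factor σ i k := by
  apply List.ext_getElem (by simp; omega)
  intro m _ _
  simp [factor]

lemma drop_factor (i n q : ℕ) : (factor σ i n).drop q = factor σ (i + q) (n - q) := by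
  rw [factor, factor, ← List.map_drop, List.drop_range', Nat.mul_one]

lemma getD_factor {i n k : ℕ} (d : Γ) (h : k < n) : (factor σ i n).getD k d = σ (i + k) := by
  rw [List.getD_eq_getElem _ _ (by simpa using h)]
  simp [factor]

lemma eq_factor_of_prefix {l : List Γ} {n : ℕ} (h : l <+: factor σ 0 n) :
    l = factor σ 0 l.length := by
  have hle : l.length ≤ n := by simpa using h.length_le
  calc l = (factor σ 0 n).take l.length := List.prefix_iff_eq_take.mp h
    _ = factor σ 0 l.length := take_factor σ hle

end Words

section Morphism

variable {Γ : Type*} (g : Γ → List Γ)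

@[simp]
lemma applyW_nil : applyW g [] = [] := rfl

@[simp]
lemma applyW_cons (c : Γ) (w : List Γ) : applyW g (c :: w) = g c ++ applyW g w :=
  List.flatMap_cons

@[simp]
lemma applyW_append_s19 (w₁ w₂ : List Γ) :
    applyW g (w₁ ++ w₂) = applyW g w₁ ++ applyW g w₂ :=
  List.flatMap_append

lemma length_le_length_applyW (hg : ∀ c, g c ≠ []) (w : List Γ) :
    w.length ≤ (applyW g w).length := by
  induction w with
  | nil => simp
  | cons c w ih =>
    have := List.length_pos_iff.mpr (hg c)
    simp only [applyW_cons, List.length_append, List.length_cons]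
    omega

structure Prolongable (g : Γ → List Γ) (a : Γ) : Prop where
  ne_nil : ∀ c, g c ≠ []
  exists_eq_cons : ∃ u, u ≠ [] ∧ g a = a :: u

variable {g} {a : Γ}

lemma iterate_prefix_iterate_succ (hg : Prolongable g a) (n : ℕ) :
    (applyW g)^[n] [a] <+: (applyW g)^[n + 1] [a] := by
  induction n with
  | zero =>
    obtain ⟨u, -, hu⟩ := hg.exists_eq_cons
    simp [hu]
  | succ n ih =>
    calc (applyW g)^[n + 1] [a] = applyW g ((applyW g)^[n] [a]) :=
          Function.iterate_succ_apply' _ _ _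
      _ <+: applyW g ((applyW g)^[n + 1] [a]) := ih.flatMap g
      _ = (applyW g)^[n + 2] [a] := (Function.iterate_succ_apply' _ _ _).symm

lemma iterate_prefix_iterate (hg : Prolongable g a) {m n : ℕ} (h : m ≤ n) :
    (applyW g)^[m] [a] <+: (applyW g)^[n] [a] := by
  induction n, h using Nat.le_induction with
  | base => exact List.prefix_refl _
  | succ n _ ih => exact ih.trans (iterate_prefix_iterate_succ hg n)

lemma lt_length_iterate (hg : Prolongable g a) (n : ℕ) : n < ((applyW g)^[n] [a]).length := by
  obtain ⟨u, hu, hgu⟩ := hg.exists_eq_cons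
  induction n with
  | zero => simp
  | succ n ih =>
    obtain ⟨t, ht⟩ := iterate_prefix_iterate hg (Nat.zero_le n)
    have hW : (applyW g)^[n] [a] = a :: t := by simpa using ht.symm
    have hu' := List.length_pos_iff.mpr hu
    have ht' := length_le_length_applyW g hg.ne_nil t
    rw [hW] at ih
    rw [Function.iterate_succ_apply', hW, applyW_cons, hgu]
    simp only [List.length_cons, List.length_append] at ih ⊢
    omega

lemma fixpt_zero (hg : Prolongable g a) : fixpt g a 0 = a := by
  obtain ⟨u, -, hgu⟩ := hg.exists_eq_cons
  simp [fixpt, hgu]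

lemma iterate_eq_factor (hg : Prolongable g a) (n : ℕ) :
    (applyW g)^[n] [a] = factor (fixpt g a) 0 ((applyW g)^[n] [a]).length := by
  apply List.ext_getElem (by simp)
  intro m hm _
  have hm' := lt_length_iterate hg (m + 1)
  simp only [factor, List.getElem_map, List.getElem_range', Nat.zero_add, Nat.one_mul, fixpt]
  rcases le_total n (m + 1) with h | h
  · rw [List.getD_eq_getElem _ _ (by omega), (iterate_prefix_iterate hg h).getElem hm]
  · rw [List.getD_eq_getElem _ _ (by omega), (iterate_prefix_iterate hg h).getElem (by omega)]

variable (g a) in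
/-- The fixed point `σ = g(σ)` is the concatenation of the blocks `g(σ(j))`; the `j`-th one
starts at `blockStart g a j`. -/
def blockStart (j : ℕ) : ℕ := (applyW g (factor (fixpt g a) 0 j)).length

lemma blockStart_zero : blockStart g a 0 = 0 := rfl

lemma blockStart_succ (j : ℕ) :
    blockStart g a (j + 1) = blockStart g a j + (g (fixpt g a j)).length := by
  rw [blockStart, blockStart, factor_add, applyW_append_s19, List.length_append]
  simp [factor]

lemma applyW_factor_zero (hg : Prolongable g a) (n : ℕ) :
    applyW g (factor (fixpt g a) 0 n) = factor (fixpt g a) 0 (blockStart g a n) := by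
  have hn := lt_length_iterate hg n
  have hpre : factor (fixpt g a) 0 n <+: (applyW g)^[n] [a] := by
    rw [iterate_eq_factor hg n, ← take_factor _ hn.le]
    exact List.take_prefix _ _
  have himg : applyW g (factor (fixpt g a) 0 n) <+: factor (fixpt g a) 0
      ((applyW g)^[n + 1] [a]).length := by
    rw [← iterate_eq_factor hg, Function.iterate_succ_apply']
    exact hpre.flatMap g
  exact eq_factor_of_prefix _ himg

lemma applyW_factor (hg : Prolongable g a) (j m : ℕ) :
    applyW g (factor (fixpt g a) j m) =
      factor (fixpt g a) (blockStart g a j) (applyW g (factor (fixpt g a) j m)).length := by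
  set w := applyW g (factor (fixpt g a) j m)
  have hsplit : factor (fixpt g a) 0 (blockStart g a (j + m)) =
      factor (fixpt g a) 0 (blockStart g a j) ++ w := by
    rw [← applyW_factor_zero hg, ← applyW_factor_zero hg, factor_add, Nat.zero_add,
      applyW_append_s19]
  have hw : w = (factor (fixpt g a) 0 (blockStart g a (j + m))).drop (blockStart g a j) := by
    rw [hsplit, List.drop_left']
    simp
  rw [hw, drop_factor, Nat.zero_add]
  simp

lemma factor_blockStart_add (hg : Prolongable g a) {j m q n : ℕ}
    (h : q + n ≤ (applyW g (factor (fixpt g a) j m)).length) :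
    factor (fixpt g a) (blockStart g a j + q) n =
      ((applyW g (factor (fixpt g a) j m)).drop q).take n := by
  rw [applyW_factor hg, drop_factor, take_factor _ (by omega)]

lemma exists_eq_blockStart_add (hg : Prolongable g a) (i : ℕ) :
    ∃ j r, r < (g (fixpt g a j)).length ∧ i = blockStart g a j + r := by
  induction i with
  | zero => exact ⟨0, 0, List.length_pos_iff.mpr (hg.ne_nil _), rfl⟩
  | succ i ih =>
    obtain ⟨j, r, hr, rfl⟩ := ih
    by_cases h : r + 1 < (g (fixpt g a j)).length
    · exact ⟨j, r + 1, h, by omega⟩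
    · refine ⟨j + 1, 0, List.length_pos_iff.mpr (hg.ne_nil _), ?_⟩
      rw [blockStart_succ]
      omega

lemma lt_blockStart (hg : Prolongable g a) {j : ℕ} (hj : 1 ≤ j) : j < blockStart g a j := by
  induction j, hj using Nat.le_induction with
  | base =>
    obtain ⟨u, hu, hgu⟩ := hg.exists_eq_cons
    have := List.length_pos_iff.mpr hu
    simp [blockStart_succ, blockStart_zero, fixpt_zero hg, hgu]
    omega
  | succ j _ ih =>
    have := List.length_pos_iff.mpr (hg.ne_nil (fixpt g a j))
    rw [blockStart_succ]
    omega

end Morphism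

section Coding

variable {Γ Δ : Type*} {g : Γ → List Γ} {g' : Δ → List Δ} {π : Γ → Δ}

lemma map_applyW (hπ : ∀ c, (g c).map π = g' (π c)) (w : List Γ) :
    (applyW g w).map π = applyW g' (w.map π) := by
  induction w with
  | nil => rfl
  | cons c w ih => simp [List.map_append, ih, hπ]

lemma map_iterate (hπ : ∀ c, (g c).map π = g' (π c)) (a : Γ) (n : ℕ) :
    ((applyW g)^[n] [a]).map π = (applyW g')^[n] [π a] := by
  induction n with
  | zero => rfl
  | succ n ih => rw [Function.iterate_succ_apply', Function.iterate_succ_apply', map_applyW hπ, ih]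

lemma fixpt_map (hπ : ∀ c, (g c).map π = g' (π c)) (a : Γ) (n : ℕ) :
    fixpt g' (π a) n = π (fixpt g a n) := by
  rw [fixpt, fixpt, ← map_iterate hπ, List.getD_map]

end Coding

namespace EvenFib

def fibMorph : Fin 2 → List (Fin 2) := ![[0, 1], [0]]

def morphE : Fin 5 → List (Fin 5) := ![[0, 1], [2], [3, 1], [0, 4], [0]]

def codingE : Fin 5 → Fin 2 := ![0, 0, 1, 1, 1]

def toFib : Fin 5 → Fin 2 := ![0, 1, 0, 0, 1]

lemma map_toFib_morphE (c : Fin 5) : (morphE c).map toFib = fibMorph (toFib c) := by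
  fin_cases c <;> rfl

lemma prolongable_morphE : Prolongable morphE 0 :=
  ⟨by decide, [1], by decide, rfl⟩

local notation "ρ" => fixpt morphE 0
local notation "T" => blockStart morphE 0

def shift : Fin 5 → ℤ := ![0, 1, -1, 0, 0]

-- Starts at `2j - 1` because a doubled position can lie just before a block start (`shift = -1`).
def window (j : ℕ) : List (Fin 5) × List (Fin 5) := (factor ρ j 2, factor ρ (2 * j - 1) 4)

lemma getD_window_fst (j : ℕ) {k : ℕ} (hk : k < 2) : (window j).1.getD k 0 = ρ (j + k) :=
  getD_factor _ _ hk

lemma getD_window_snd (j : ℕ) {k : ℕ} (hk : k < 4) :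
    (window j).2.getD k 0 = ρ (2 * j - 1 + k) :=
  getD_factor _ _ hk

def childOffset (w : List (Fin 5) × List (Fin 5)) (r : ℕ) : ℤ :=
  (morphE (w.2.getD 0 0)).length + 2 * r - 1 + shift (w.1.getD 0 0)

-- `window (T j + r)` in terms of `window j`, using `2 T(j) = T(2j) + shift(ρ(j))`.
def child (w : List (Fin 5) × List (Fin 5)) (r : ℕ) : List (Fin 5) × List (Fin 5) :=
  (((applyW morphE w.1).drop r).take 2, ((applyW morphE w.2).drop (childOffset w r).toNat).take 4)

-- The windows `window j`, `j ≥ 1`, that occur in `ρ`.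
def windows : List (List (Fin 5) × List (Fin 5)) :=
  [([0, 1], [0, 3, 1, 0]), ([0, 1], [1, 0, 1, 2]), ([0, 1], [1, 0, 4, 2]), ([0, 1], [2, 0, 1, 0]),
   ([0, 1], [2, 0, 1, 2]), ([0, 1], [2, 3, 1, 0]), ([0, 3], [1, 2, 0, 1]), ([0, 3], [4, 2, 0, 1]),
   ([0, 4], [1, 0, 3, 1]), ([0, 4], [1, 2, 0, 1]), ([0, 4], [1, 2, 3, 1]), ([1, 0], [0, 3, 1, 0]),
   ([1, 0], [1, 0, 1, 2]), ([1, 0], [1, 0, 4, 2]), ([1, 0], [2, 0, 1, 0]), ([1, 0], [2, 0, 1, 2]),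
   ([1, 0], [2, 3, 1, 0]), ([1, 2], [1, 0, 3, 1]), ([1, 2], [1, 2, 0, 1]), ([1, 2], [1, 2, 3, 1]),
   ([1, 2], [4, 2, 0, 1]), ([2, 0], [0, 1, 0, 3]), ([2, 0], [0, 1, 2, 0]), ([2, 0], [0, 1, 2, 3]),
   ([2, 0], [0, 4, 2, 0]), ([2, 3], [0, 1, 0, 4]), ([2, 3], [3, 1, 0, 1]), ([2, 3], [3, 1, 0, 4]),
   ([3, 1], [0, 1, 0, 3]), ([3, 1], [0, 1, 2, 0]), ([3, 1], [0, 1, 2, 3]), ([3, 1], [0, 4, 2, 0]),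
   ([4, 2], [0, 1, 0, 4]), ([4, 2], [3, 1, 0, 1]), ([4, 2], [3, 1, 0, 4])]

lemma child_mem_windows : ∀ w ∈ windows, ∀ r < (morphE (w.1.getD 0 0)).length,
    r + 2 ≤ (applyW morphE w.1).length ∧ 0 ≤ childOffset w r ∧
      (childOffset w r).toNat + 4 ≤ (applyW morphE w.2).length ∧ child w r ∈ windows := by
  intro w hw
  fin_cases hw <;> decide

lemma shift_succ_of_mem_windows : ∀ w ∈ windows,
    shift (w.1.getD 1 0) = shift (w.1.getD 0 0) + 2 * (morphE (w.1.getD 0 0)).length -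
      (morphE (w.2.getD 1 0)).length - (morphE (w.2.getD 2 0)).length := by
  intro w hw
  fin_cases hw <;> decide

lemma codingE_eq_toFib_of_mem_windows :
    ∀ w ∈ windows, codingE (w.1.getD 0 0) = toFib (w.2.getD 1 0) := by
  intro w hw
  fin_cases hw <;> decide

lemma window_blockStart_add {j r : ℕ} (hj : 1 ≤ j) (hw : window j ∈ windows)
    (halign : 2 * (T j : ℤ) = T (2 * j) + shift (ρ j)) (hr : r < (morphE (ρ j)).length) :
    window (T j + r) = child (window j) r := by
  have hcur : (window j).1.getD 0 0 = ρ j := getD_window_fst j (by norm_num)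
  have hprev : (window j).2.getD 0 0 = ρ (2 * j - 1) := getD_window_snd j (by norm_num)
  obtain ⟨hlen₁, hoff, hlen₂, -⟩ := child_mem_windows _ hw r (by rwa [hcur])
  rw [childOffset, hcur, hprev] at hoff hlen₂
  have hstart : T (2 * j) = T (2 * j - 1) + (morphE (ρ (2 * j - 1))).length := by
    rw [← blockStart_succ, Nat.sub_add_cancel (by omega)]
  refine Prod.ext (factor_blockStart_add prolongable_morphE hlen₁) ?_
  rw [child, childOffset, hcur, hprev]
  dsimp only [window] at hlen₂ ⊢
  rw [← factor_blockStart_add prolongable_morphE hlen₂]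
  congr 1
  omega

lemma two_mul_blockStart_succ {j : ℕ} (hj : 1 ≤ j) (hw : window j ∈ windows)
    (halign : 2 * (T j : ℤ) = T (2 * j) + shift (ρ j)) :
    2 * (T (j + 1) : ℤ) = T (2 * (j + 1)) + shift (ρ (j + 1)) := by
  have hshift := shift_succ_of_mem_windows _ hw
  rw [getD_window_fst j (k := 0) (by norm_num), getD_window_fst j (k := 1) (by norm_num),
    getD_window_snd j (k := 1) (by norm_num), getD_window_snd j (k := 2) (by norm_num),
    show 2 * j - 1 + 1 = 2 * j by omega, show 2 * j - 1 + 2 = 2 * j + 1 by omega] at hshift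
  simp only [Nat.add_zero] at hshift
  rw [show 2 * (j + 1) = 2 * j + 1 + 1 by ring, blockStart_succ, blockStart_succ, blockStart_succ]
  push_cast
  omega

lemma window_mem_windows_and_two_mul_blockStart {j : ℕ} (hj : 1 ≤ j) :
    window j ∈ windows ∧ 2 * (T j : ℤ) = T (2 * j) + shift (ρ j) := by
  induction j using Nat.strong_induction_on with
  | _ j ih =>
  obtain rfl | hj2 : j = 1 ∨ 2 ≤ j := by omega
  · decide
  obtain ⟨hmem, halign⟩ := ih (j - 1) (by omega) (by omega)
  refine ⟨?_, Nat.sub_add_cancel hj ▸ two_mul_blockStart_succ (by omega) hmem halign⟩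
  obtain ⟨j', r, hr, rfl⟩ := exists_eq_blockStart_add prolongable_morphE j
  have hj' : 1 ≤ j' := by
    by_contra! h0
    obtain rfl : j' = 0 := by omega
    rw [fixpt_zero prolongable_morphE] at hr
    simp [blockStart_zero, morphE] at hr hj2
    omega
  have hlt : j' < blockStart morphE 0 j' + r :=
    (lt_blockStart prolongable_morphE hj').trans_le (Nat.le_add_right _ _)
  obtain ⟨hmem', halign'⟩ := ih j' hlt hj'
  rw [window_blockStart_add hj' hmem' halign' hr]
  exact (child_mem_windows _ hmem' r (by rwa [getD_window_fst j' (by norm_num)])).2.2.2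

lemma codingE_eq_toFib_two_mul (i : ℕ) : codingE (ρ i) = toFib (ρ (2 * i)) := by
  obtain rfl | hi := Nat.eq_zero_or_pos i
  · decide
  have h := codingE_eq_toFib_of_mem_windows _ (window_mem_windows_and_two_mul_blockStart hi).1
  rwa [getD_window_fst i (by norm_num), getD_window_snd i (by norm_num),
    show 2 * i - 1 + 1 = 2 * i by omega] at h

end EvenFib

open EvenFib in
/-- `even(fib) = τ_e(f_e^∞(0))` for `f_e(0)=01, f_e(1)=2, f_e(2)=31,
f_e(3)=04, f_e(4)=0` and `τ_e(0)=τ_e(1)=0, τ_e(2)=τ_e(3)=τ_e(4)=1`, where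
`fib = f^∞(0)` for `f(0)=01, f(1)=0` and `even(σ)(i)=σ(2i)`. -/
theorem stmt_19 :
    (fun i : ℕ => fixpt (![[0, 1], [0]] : Fin 2 → List (Fin 2)) 0 (2 * i)) =
      applyC (![0, 0, 1, 1, 1] : Fin 5 → Fin 2)
        (fixpt (![[0, 1], [2], [3, 1], [0, 4], [0]] :
          Fin 5 → List (Fin 5)) 0) := by
  funext i
  exact (fixpt_map map_toFib_morphE 0 (2 * i)).trans (codingE_eq_toFib_two_mul i).symm
end
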